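/- arXiv:1206.3018 — 3 statements merged into one kernel-verified Lean document; each statement's English description precedes it below -/
import Mathlib

section
/- The relativistic Burgers flux pair (T⁰, T¹) with T⁰(v) = v/√(1−ε²v²), T¹(v) = ε⁻²(−1 + 1/√(1−ε²v²)) satisfies the Lorentz compatibility relations: for all v, V ∈ (−1/ε,1/ε), γ(V)·(T⁰(v) − ε²V·T¹(v)) = T⁰(v̄) − T⁰(−V) and γ(V)·(−V·T⁰(v) + T¹(v)) = T¹(v̄) − T¹(−V), where v̄ = (v−V)/(1−ε²Vv) and γ(V) = (1−ε²V²)^{−1/2}. -/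
/-!
Writing `γ(u) = (1 - ε²u²)^(-1/2)` for the Lorentz factor, the fluxes are `T⁰(u) = u γ(u)` and
`T¹(u) = ε⁻² (γ(u) - 1)`. Both relations are then linear in `γ(v̄)` and `v̄ γ(v̄)`, and follow from
the composition law `γ(v̄) = γ(v) γ(V) (1 - ε² V v)` of relativistic velocity subtraction, which
comes from `1 - ε² v̄² = (1 - ε² v²)(1 - ε² V²) / (1 - ε² V v)²`.
-/

open Real

noncomputable def lorentzFactor (ε u : ℝ) : ℝ := (√(1 - ε ^ 2 * u ^ 2))⁻¹

@[simp]
lemma lorentzFactor_neg (ε u : ℝ) : lorentzFactor ε (-u) = lorentzFactor ε u := by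
  simp [lorentzFactor]

lemma rpow_neg_half_eq_lorentzFactor {ε V : ℝ} (hV : ε ^ 2 * V ^ 2 ≤ 1) :
    (1 - ε ^ 2 * V ^ 2) ^ (-(1 : ℝ) / 2) = lorentzFactor ε V := by
  rw [lorentzFactor, sqrt_eq_rpow, ← rpow_neg (by linarith), neg_div]

lemma sq_mul_sq_lt_one_of_mem_Ioo {ε u : ℝ} (hε : 0 < ε) (hu : u ∈ Set.Ioo (-(1 / ε)) (1 / ε)) :
    ε ^ 2 * u ^ 2 < 1 := by
  have h : |ε * u| < 1 := by
    rw [abs_mul, abs_of_pos hε, ← lt_div_iff₀' hε]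
    exact abs_lt.2 hu
  simpa [mul_pow] using (sq_lt_one_iff_abs_lt_one _).2 h

lemma one_sub_mul_mul_pos {c v V : ℝ} (hc : 0 ≤ c) (hv : c * v ^ 2 < 1) (hV : c * V ^ 2 < 1) :
    0 < 1 - c * V * v := by
  nlinarith [mul_nonneg hc (sq_nonneg (v - V))]

lemma one_sub_mul_div_sq {K : Type*} [Field K] {c v V : K} (hd : 1 - c * V * v ≠ 0) :
    1 - c * ((v - V) / (1 - c * V * v)) ^ 2 =
      (1 - c * v ^ 2) * (1 - c * V ^ 2) / (1 - c * V * v) ^ 2 := by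
  rw [div_pow, mul_div_assoc', one_sub_div (pow_ne_zero 2 hd)]
  ring

lemma lorentzFactor_sub {ε v V : ℝ} (hv : ε ^ 2 * v ^ 2 < 1) (hV : ε ^ 2 * V ^ 2 < 1) :
    lorentzFactor ε ((v - V) / (1 - ε ^ 2 * V * v)) =
      lorentzFactor ε v * lorentzFactor ε V * (1 - ε ^ 2 * V * v) := by
  have hd := one_sub_mul_mul_pos (sq_nonneg ε) hv hV
  rw [lorentzFactor, one_sub_mul_div_sq hd.ne', sqrt_div' _ (sq_nonneg _),
    sqrt_mul (by linarith), sqrt_sq hd.le, lorentzFactor, lorentzFactor, inv_div, div_eq_mul_inv,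
    mul_inv, mul_comm]

lemma div_mul_lorentzFactor_sub {ε v V : ℝ} (hv : ε ^ 2 * v ^ 2 < 1) (hV : ε ^ 2 * V ^ 2 < 1) :
    (v - V) / (1 - ε ^ 2 * V * v) * lorentzFactor ε ((v - V) / (1 - ε ^ 2 * V * v)) =
      (v - V) * lorentzFactor ε v * lorentzFactor ε V := by
  have hd := (one_sub_mul_mul_pos (sq_nonneg ε) hv hV).ne'
  rw [lorentzFactor_sub hv hV, div_mul_eq_mul_div, div_eq_iff hd]
  ring

/-- Lorentz compatibility relations for the relativistic Burgers
flux pair (T⁰, T¹). -/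
theorem stmt9 (ε v V : ℝ) (hε : 0 < ε)
    (hv : v ∈ Set.Ioo (-(1 / ε)) (1 / ε)) (hV : V ∈ Set.Ioo (-(1 / ε)) (1 / ε)) :
    let T0 : ℝ → ℝ := fun u => u / Real.sqrt (1 - ε ^ 2 * u ^ 2)
    let T1 : ℝ → ℝ := fun u => (ε ^ 2)⁻¹ * (-1 + (Real.sqrt (1 - ε ^ 2 * u ^ 2))⁻¹)
    let γ : ℝ := (1 - ε ^ 2 * V ^ 2) ^ (-(1 : ℝ) / 2)
    let vb : ℝ := (v - V) / (1 - ε ^ 2 * V * v)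
    γ * (T0 v - ε ^ 2 * V * T1 v) = T0 vb - T0 (-V) ∧
    γ * (-V * T0 v + T1 v) = T1 vb - T1 (-V) := by
  intro T0 T1 γ vb
  have hv' := sq_mul_sq_lt_one_of_mem_Ioo hε hv
  have hV' := sq_mul_sq_lt_one_of_mem_Ioo hε hV
  have hT0 (u : ℝ) : T0 u = u * lorentzFactor ε u := rfl
  have hT1 (u : ℝ) : T1 u = (ε ^ 2)⁻¹ * (-1 + lorentzFactor ε u) := rfl
  have hγ : γ = lorentzFactor ε V := rpow_neg_half_eq_lorentzFactor hV'.le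
  simp only [hT0, hT1, hγ, vb, lorentzFactor_neg]
  rw [div_mul_lorentzFactor_sub hv' hV', lorentzFactor_sub hv' hV']
  have hε2 : ε ^ 2 ≠ 0 := by positivity
  constructor <;> field_simp <;> ring
end

section
/- If T⁰, T¹ : ℝ → ℝ are twice differentiable and satisfy the Galilean invariance relations T⁰(v+V) = T⁰(v) + C₁(V) and T¹(v+V) − V·T⁰(v+V) = T¹(v) + C₂(V) for all v, V ∈ ℝ (with C₁, C₂ depending only on V), and are normalized by T⁰(0) = T¹(0) = 0, T⁰'(0) = 1, T¹'(0) = 0, T¹''(0) = 1, then T⁰(v) = v and T¹(v) = v²/2 for all v. -/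
/-!
Both relations say that a function changes under a shift `v ↦ v + V` by an amount depending only
on `V`: directly for `T⁰`, and for `T¹(v) - v²/2` once `T⁰ = id` is known. Such a function is
continuous and additive after subtracting its value at `0`, hence affine, and the normalization
at `0` fixes the constant and the slope.
-/

section ShiftInvariantIncrements

variable {f C : ℝ → ℝ}

theorem Real.eq_add_mul_of_map_add (hf : Continuous f) (h : ∀ v V, f (v + V) = f v + C V) (x : ℝ) :
    f x = f 0 + (f 1 - f 0) * x := by
  have hC (V : ℝ) : C V = f V - f 0 := by
    have := h 0 V
    rw [zero_add] at this
    linarith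
  let F : ℝ →+ ℝ := AddMonoidHom.mk' (fun x => f x - f 0) fun x y => by
    simp only [h x y, hC y]; ring
  have hF := map_real_smul F (hf.sub continuous_const) x 1
  simp only [F, AddMonoidHom.mk'_apply, smul_eq_mul, mul_one] at hF
  linarith

theorem Real.eq_add_deriv_mul_of_map_add (hf : Continuous f) (h : ∀ v V, f (v + V) = f v + C V)
    (x : ℝ) : f x = f 0 + deriv f 0 * x := by
  have hd : HasDerivAt f (f 1 - f 0) 0 := by
    have := ((hasDerivAt_id (0 : ℝ)).const_mul (f 1 - f 0)).const_add (f 0)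
    simp only [mul_one] at this
    exact this.congr_of_eventuallyEq
      (Filter.Eventually.of_forall (Real.eq_add_mul_of_map_add hf h))
  rw [hd.deriv]
  exact Real.eq_add_mul_of_map_add hf h x

end ShiftInvariantIncrements

theorem stmt10_general (T0 T1 C1 C2 : ℝ → ℝ)
    (hT0 : ContDiff ℝ 2 T0) (hT1 : ContDiff ℝ 2 T1)
    (h1 : ∀ v V : ℝ, T0 (v + V) = T0 v + C1 V)
    (h2 : ∀ v V : ℝ, T1 (v + V) - V * T0 (v + V) = T1 v + C2 V)
    (n0 : T0 0 = 0) (n1 : T1 0 = 0)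
    (n2 : deriv T0 0 = 1) (n3 : deriv T1 0 = 0) :
    ∀ v : ℝ, T0 v = v ∧ T1 v = v ^ 2 / 2 := by
  have hT0v (v : ℝ) : T0 v = v := by
    simpa [n0, n2] using Real.eq_add_deriv_mul_of_map_add hT0.continuous h1 v
  obtain ⟨g, hg⟩ : ∃ g : ℝ → ℝ, g = fun v => T1 v - v ^ 2 / 2 := ⟨_, rfl⟩
  have hg_shift (v V : ℝ) : g (v + V) = g v + (C2 V + V ^ 2 / 2) := by
    have := h2 v V
    rw [hT0v] at this
    subst hg
    linear_combination this
  have hg_deriv : deriv g 0 = 0 := by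
    have hsq : HasDerivAt (fun v : ℝ => v ^ 2 / 2) 0 0 := by
      simpa using (hasDerivAt_pow 2 (0 : ℝ)).div_const 2
    have hd : HasDerivAt g (deriv T1 0 - 0) 0 :=
      hg ▸ (hT1.differentiable (by norm_num) 0).hasDerivAt.sub hsq
    rw [hd.deriv, n3, sub_zero]
  have hg_cont : Continuous g := hg ▸ hT1.continuous.sub ((continuous_pow 2).div_const 2)
  intro v
  have hgv := Real.eq_add_deriv_mul_of_map_add hg_cont hg_shift v
  rw [hg_deriv, zero_mul, add_zero, hg] at hgv
  simp only [n1] at hgv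
  exact ⟨hT0v v, by linarith⟩

/-- Galilean invariance forces T⁰(v) = v and T¹(v) = v²/2
under the stated normalization. -/
theorem stmt10 (T0 T1 C1 C2 : ℝ → ℝ)
    (hT0 : ContDiff ℝ 2 T0) (hT1 : ContDiff ℝ 2 T1)
    (h1 : ∀ v V : ℝ, T0 (v + V) = T0 v + C1 V)
    (h2 : ∀ v V : ℝ, T1 (v + V) - V * T0 (v + V) = T1 v + C2 V)
    (n0 : T0 0 = 0) (n1 : T1 0 = 0)
    (n2 : deriv T0 0 = 1) (n3 : deriv T1 0 = 0)
    (n4 : deriv (deriv T1) 0 = 1) :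
    ∀ v : ℝ, T0 v = v ∧ T1 v = v ^ 2 / 2 :=
  stmt10_general T0 T1 C1 C2 hT0 hT1 h1 h2 n0 n1 n2 n3
end

section
/- Fix m > 0 and c > 0. A differentiable function v : (2m, ∞) → ℝ with c² − v(r)² > 0 satisfies (1/2)·d/dr(r(r−2m)v²) = rv² − mc² on (2m,∞) if and only if the quantity (c² − v(r)²)/(1 − 2m/r) is constant on (2m,∞). -/
/-!
Write `K²(r) = (c² − v(r)²)/(1 − 2m/r)`. Since `r (r − 2m) v² = r (r − 2m) c² − (r − 2m)² K²`,
differentiating gives `½ (r (r − 2m) v²)' = r v² − m c² − ½ (r − 2m)² (K²)'`.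
So on `r > 2m` the steady equation holds exactly where `(K²)' = 0`, and a function with vanishing
derivative on the connected open set `(2m, ∞)` is constant.
-/

open Set Filter Topology

noncomputable section

def kSq (m c : ℝ) (v : ℝ → ℝ) (r : ℝ) : ℝ := (c ^ 2 - v r ^ 2) / (1 - 2 * m / r)

variable {m c : ℝ} {v : ℝ → ℝ} {r : ℝ}

lemma one_sub_div_ne_zero (hr₀ : r ≠ 0) (hr : r ≠ 2 * m) : 1 - 2 * m / r ≠ 0 := by
  rw [one_sub_div hr₀]
  exact div_ne_zero (sub_ne_zero.2 hr) hr₀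

lemma sub_mul_kSq (hr₀ : r ≠ 0) (hr : r ≠ 2 * m) :
    (r - 2 * m) * kSq m c v r = r * (c ^ 2 - v r ^ 2) := by
  have := sub_ne_zero.2 hr
  unfold kSq
  field_simp

/-- Holds also at `r = 2m`, where `kSq` takes the junk value `0`. -/
lemma mul_sub_mul_sq_eq (hr₀ : r ≠ 0) :
    r * (r - 2 * m) * v r ^ 2 = r * (r - 2 * m) * c ^ 2 - (r - 2 * m) ^ 2 * kSq m c v r := by
  by_cases hr : r = 2 * m
  · subst hr
    ring
  · linear_combination (r - 2 * m) * sub_mul_kSq (c := c) (v := v) hr₀ hr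

lemma differentiableAt_kSq (hv : DifferentiableAt ℝ v r) (hr₀ : r ≠ 0) (hr : r ≠ 2 * m) :
    DifferentiableAt ℝ (kSq m c v) r :=
  ((differentiableAt_const _).sub (hv.pow 2)).div
    ((differentiableAt_const _).sub ((differentiableAt_const _).div differentiableAt_id hr₀))
    (one_sub_div_ne_zero hr₀ hr)

lemma hasDerivAt_steady_of_hasDerivAt_kSq {K' : ℝ} (hK : HasDerivAt (kSq m c v) K' r)
    (hr₀ : r ≠ 0) (hr : r ≠ 2 * m) :
    HasDerivAt (fun s => s * (s - 2 * m) * v s ^ 2 / 2)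
      (r * v r ^ 2 - m * c ^ 2 - (r - 2 * m) ^ 2 * K' / 2) r := by
  have hW : HasDerivAt (fun s => (s * (s - 2 * m) * c ^ 2 - (s - 2 * m) ^ 2 * kSq m c v s) / 2)
      (((r - 2 * m + r) * c ^ 2 - (2 * (r - 2 * m) * kSq m c v r + (r - 2 * m) ^ 2 * K')) / 2)
      r := by
    have hid := (hasDerivAt_id' (x := r)).sub_const (2 * m)
    refine (((((hasDerivAt_id' (x := r)).fun_mul hid).mul_const (c ^ 2)).fun_sub
      ((hid.fun_pow 2).fun_mul hK)).div_const 2).congr_deriv ?_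
    ring
  have hEq : (fun s => s * (s - 2 * m) * v s ^ 2 / 2)
      =ᶠ[𝓝 r] fun s => (s * (s - 2 * m) * c ^ 2 - (s - 2 * m) ^ 2 * kSq m c v s) / 2 := by
    filter_upwards [isOpen_ne.mem_nhds hr₀] with s hs
    rw [mul_sub_mul_sq_eq hs]
  refine (hW.congr_of_eventuallyEq hEq).congr_deriv ?_
  linear_combination (-1) * sub_mul_kSq (c := c) (v := v) hr₀ hr

lemma hasDerivAt_steady_iff {K' : ℝ} (hK : HasDerivAt (kSq m c v) K' r) (hr₀ : r ≠ 0)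
    (hr : r ≠ 2 * m) :
    HasDerivAt (fun s => s * (s - 2 * m) * v s ^ 2 / 2) (r * v r ^ 2 - m * c ^ 2) r ↔ K' = 0 := by
  have hW := hasDerivAt_steady_of_hasDerivAt_kSq hK hr₀ hr
  have hr' : (r - 2 * m) ^ 2 ≠ 0 := pow_ne_zero 2 (sub_ne_zero.2 hr)
  constructor
  · intro h
    have : (r - 2 * m) ^ 2 * K' = 0 := by linarith [h.unique hW]
    exact (mul_eq_zero.1 this).resolve_left hr'
  · rintro rfl
    simpa using hW

end

theorem stmt13_general (m c : ℝ) (hm : 0 < m) (v : ℝ → ℝ)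
    (hv : DifferentiableOn ℝ v (Set.Ioi (2 * m))) :
    (∀ r ∈ Set.Ioi (2 * m),
        HasDerivAt (fun s : ℝ => s * (s - 2 * m) * (v s) ^ 2 / 2)
          (r * (v r) ^ 2 - m * c ^ 2) r) ↔
    (∃ k : ℝ, ∀ r ∈ Set.Ioi (2 * m),
        (c ^ 2 - (v r) ^ 2) / (1 - 2 * m / r) = k) := by
  have hr₀ : ∀ r ∈ Ioi (2 * m), r ≠ 0 := fun r hr => (by linarith [mem_Ioi.1 hr] : 0 < r).ne'
  have hr : ∀ r ∈ Ioi (2 * m), r ≠ 2 * m := fun r hr => (mem_Ioi.1 hr).ne'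
  have hK : ∀ r ∈ Ioi (2 * m), DifferentiableAt ℝ (kSq m c v) r := fun r h =>
    differentiableAt_kSq (hv.differentiableAt (isOpen_Ioi.mem_nhds h)) (hr₀ r h) (hr r h)
  constructor
  · intro hsteady
    exact isOpen_Ioi.exists_is_const_of_deriv_eq_zero isPreconnected_Ioi
      (fun r h => (hK r h).differentiableWithinAt) fun r h =>
        (hasDerivAt_steady_iff (hK r h).hasDerivAt (hr₀ r h) (hr r h)).1 (hsteady r h)
  · rintro ⟨k, hk⟩ r h
    have hconst : kSq m c v =ᶠ[𝓝 r] fun _ => k :=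
      eventually_of_mem (isOpen_Ioi.mem_nhds h) hk
    exact (hasDerivAt_steady_iff ((hasDerivAt_const r k).congr_of_eventuallyEq hconst)
      (hr₀ r h) (hr r h)).2 rfl

/-- a differentiable subluminal v on (2m,∞) is a steady solution
iff (c² − v²)/(1 − 2m/r) is constant. -/
theorem stmt13 (m c : ℝ) (hm : 0 < m) (hc : 0 < c) (v : ℝ → ℝ)
    (hv : DifferentiableOn ℝ v (Set.Ioi (2 * m)))
    (hb : ∀ r ∈ Set.Ioi (2 * m), (v r) ^ 2 < c ^ 2) :
    (∀ r ∈ Set.Ioi (2 * m),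
        HasDerivAt (fun s : ℝ => s * (s - 2 * m) * (v s) ^ 2 / 2)
          (r * (v r) ^ 2 - m * c ^ 2) r) ↔
    (∃ k : ℝ, ∀ r ∈ Set.Ioi (2 * m),
        (c ^ 2 - (v r) ^ 2) / (1 - 2 * m / r) = k) :=
  stmt13_general m c hm v hv
end
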